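/- Let A be a Noetherian ring and R a flat A-algebra. Then the total ring of fractions satisfies Q(R) = Q(R ⊗_A Q(A)), where Q(A) is the total quotient ring of A. -/

import Mathlib

/-!
`R ⊗[A] Q(A)` is the localization of `R` at the image of the nonzerodivisors of `A`, and by
flatness that image consists of nonzerodivisors of `R`. A localization of `R` at nonzerodivisors
sits between `R` and `Q(R)`, so it has the same total ring of fractions.
-/

open scoped TensorProduct nonZeroDivisors

theorem Module.Flat.algebraMap_mem_nonZeroDivisors {A R : Type*} [CommRing A] [CommRing R]
    [Algebra A R] [Module.Flat A R] {a : A} (ha : a ∈ A⁰) : algebraMap A R a ∈ R⁰ := by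
  have reg : IsSMulRegular R (algebraMap A R a) :=
    (isRegular_iff_mem_nonZeroDivisors.mpr ha).left.isSMulRegular.of_flat
  exact isRegular_iff_mem_nonZeroDivisors.mp (isLeftRegular_iff_isRegular.mp reg.isLeftRegular)

theorem Module.Flat.algebraMapSubmonoid_le_nonZeroDivisors (A R : Type*) [CommRing A]
    [CommRing R] [Algebra A R] [Module.Flat A R] :
    Algebra.algebraMapSubmonoid R A⁰ ≤ R⁰ := by
  rintro _ ⟨a, ha, rfl⟩
  exact Module.Flat.algebraMap_mem_nonZeroDivisors ha

theorem IsLocalization.exists_ringEquiv_fractionRing {R T : Type*} [CommRing R] [CommRing T]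
    [Algebra R T] (M : Submonoid R) (hM : M ≤ R⁰) [IsLocalization M T] :
    ∃ e : FractionRing T ≃+* FractionRing R,
      (e : FractionRing T →+* FractionRing R).comp
        ((algebraMap T (FractionRing T)).comp (algebraMap R T)) = algebraMap R (FractionRing R) := by
  let _ : Algebra T (FractionRing R) :=
    localizationAlgebraOfSubmonoidLe T (FractionRing R) M R⁰ hM
  have : IsScalarTower R T (FractionRing R) :=
    localization_isScalarTower_of_submonoid_le T (FractionRing R) M R⁰ hM
  have : IsFractionRing T (FractionRing R) :=
    IsFractionRing.isFractionRing_of_isLocalization M T (FractionRing R) hM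
  let e := algEquiv T⁰ (FractionRing T) (FractionRing R)
  refine ⟨e.toRingEquiv, RingHom.ext fun r => ?_⟩
  exact (e.commutes _).trans (IsScalarTower.algebraMap_apply R T _ r).symm

theorem stmt14_general (A R : Type*) [CommRing A]
    [CommRing R] [Algebra A R] [Module.Flat A R] :
    ∃ e : Localization (nonZeroDivisors (R ⊗[A] Localization (nonZeroDivisors A))) ≃+*
        Localization (nonZeroDivisors R),
      (e : Localization (nonZeroDivisors (R ⊗[A] Localization (nonZeroDivisors A))) →+*
          Localization (nonZeroDivisors R)).comp
        ((algebraMap (R ⊗[A] Localization (nonZeroDivisors A))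
            (Localization (nonZeroDivisors (R ⊗[A] Localization (nonZeroDivisors A))))).comp
          (Algebra.TensorProduct.includeLeftRingHom :
            R →+* R ⊗[A] Localization (nonZeroDivisors A))) =
        algebraMap R (Localization (nonZeroDivisors R)) :=
  IsLocalization.exists_ringEquiv_fractionRing _
    (Module.Flat.algebraMapSubmonoid_le_nonZeroDivisors A R)

/-- Let `A` be Noetherian and `R` a flat `A`-algebra. Then the total quotient ring of `R`
agrees with that of `R ⊗_A Q(A)`: there is a ring isomorphism
`Q(R ⊗_A Q(A)) ≅ Q(R)` compatible with the canonical maps from `R`. -/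
theorem stmt14 (A R : Type*) [CommRing A] [IsNoetherianRing A]
    [CommRing R] [IsNoetherianRing R] [Algebra A R] [Module.Flat A R] :
    ∃ e : Localization (nonZeroDivisors (R ⊗[A] Localization (nonZeroDivisors A))) ≃+*
        Localization (nonZeroDivisors R),
      (e : Localization (nonZeroDivisors (R ⊗[A] Localization (nonZeroDivisors A))) →+*
          Localization (nonZeroDivisors R)).comp
        ((algebraMap (R ⊗[A] Localization (nonZeroDivisors A))
            (Localization (nonZeroDivisors (R ⊗[A] Localization (nonZeroDivisors A))))).comp
          (Algebra.TensorProduct.includeLeftRingHom :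
            R →+* R ⊗[A] Localization (nonZeroDivisors A))) =
        algebraMap R (Localization (nonZeroDivisors R)) :=
  stmt14_general A R
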